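/- arXiv:2602.14126 — 2 statements merged into one kernel-verified Lean document; each statement's English description precedes it below -/
import Mathlib

section
/- For every natural number N and every real number μ with He_{N+1}(μ) = 0, the following Hermite identity holds: Σ_{j=0}^{N} He_j(μ)²/j! = (N+1)·He_N(μ)²/N!. -/
/-!
Confluent Christoffel–Darboux: by induction on `N`, using `He_{n+2} = x He_{n+1} - (n+1) He_n`,
`N! · Σ_{j ≤ N} He_j(x)² / j! = (N+1) He_N(x)² - x He_N(x) He_{N+1}(x) + He_{N+1}(x)²`.
At a root of `He_{N+1}` the last two terms vanish.
-/

open Polynomial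
open scoped Nat

namespace Polynomial

theorem derivative_hermite_succ (n : ℕ) :
    derivative (hermite (n + 1)) = ((n : ℤ[X]) + 1) * hermite n := by
  induction n with
  | zero => simp
  | succ n ih =>
    rw [hermite_succ (n + 1), derivative_sub, derivative_mul, derivative_X, ih, derivative_mul,
      hermite_succ n]
    simp only [derivative_add, derivative_natCast, derivative_one, Nat.cast_succ]
    ring

theorem hermite_succ_succ (n : ℕ) :
    hermite (n + 2) = X * hermite (n + 1) - ((n : ℤ[X]) + 1) * hermite n := by
  rw [hermite_succ (n + 1), derivative_hermite_succ]

theorem eval_map_hermite_succ_succ {R : Type*} [CommRing R] (x : R) (n : ℕ) :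
    ((hermite (n + 2)).map (Int.castRingHom R)).eval x =
      x * ((hermite (n + 1)).map (Int.castRingHom R)).eval x
        - ((n : R) + 1) * ((hermite n).map (Int.castRingHom R)).eval x := by
  rw [hermite_succ_succ]
  simp

variable {K : Type*} [Field K] [CharZero K]

theorem sum_sq_eval_map_hermite_div_factorial (x : K) (N : ℕ) :
    ∑ j ∈ Finset.range (N + 1), ((hermite j).map (Int.castRingHom K)).eval x ^ 2 / j ! =
      (((N : K) + 1) * ((hermite N).map (Int.castRingHom K)).eval x ^ 2
        - x * ((hermite N).map (Int.castRingHom K)).eval x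
            * ((hermite (N + 1)).map (Int.castRingHom K)).eval x
        + ((hermite (N + 1)).map (Int.castRingHom K)).eval x ^ 2) / N ! := by
  induction N with
  | zero => simp [sq]
  | succ N ih =>
    rw [Finset.sum_range_succ, ih, eval_map_hermite_succ_succ, Nat.factorial_succ]
    have hN : (N ! : K) ≠ 0 := Nat.cast_ne_zero.mpr N.factorial_ne_zero
    have hN1 : (N : K) + 1 ≠ 0 := by exact_mod_cast N.succ_ne_zero
    field_simp
    push_cast
    ring

end Polynomial

/-- if `μ` is a root of `He_{N+1}` then
`Σ_{j=0}^{N} He_j(μ)²/j! = (N+1)·He_N(μ)²/N!`. -/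
theorem hermite_sum_identity_at_root (N : ℕ) (mu : ℝ)
    (hroot : ((Polynomial.hermite (N + 1)).map (Int.castRingHom ℝ)).eval mu = 0) :
    ∑ j ∈ Finset.range (N + 1),
        (((Polynomial.hermite j).map (Int.castRingHom ℝ)).eval mu) ^ 2 / (Nat.factorial j) =
      ((N : ℝ) + 1) * (((Polynomial.hermite N).map (Int.castRingHom ℝ)).eval mu) ^ 2 /
        (Nat.factorial N) := by
  rw [sum_sq_eval_map_hermite_div_factorial, hroot]
  ring
end

section
/- For every natural number N there exists an (N+1)×(N+1) unitary complex matrix U such that U† Q_N U is a diagonal matrix and U† D_N U = I − J, where D_N = (Q_N P_N − P_N Q_N)/i, I is the identity matrix and J is the all-ones matrix. Thus the action difference, expressed in the position basis, has all diagonal entries 0 and all off-diagonal entries −1. -/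
open Matrix Polynomial

/-- Heisenberg's tridiagonal position matrix `Q_N` of size `(N+1) × (N+1)`:
`Q_{j,k} = (√(k+1)·δ_{j,k+1} + √k·δ_{j,k-1}) / √2`. -/
noncomputable def Qmat (N : ℕ) : Matrix (Fin (N+1)) (Fin (N+1)) ℂ :=
  Matrix.of fun j k =>
    (((1 / Real.sqrt 2) *
        (Real.sqrt ((k : ℕ) + 1) * (if (j : ℕ) = (k : ℕ) + 1 then 1 else 0) +
         Real.sqrt (k : ℕ) * (if (j : ℕ) + 1 = (k : ℕ) then 1 else 0)) : ℝ) : ℂ)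

/-- Heisenberg's tridiagonal momentum matrix `P_N` of size `(N+1) × (N+1)`:
`P_{j,k} = (i/√2)·(√(k+1)·δ_{j,k+1} − √k·δ_{j,k-1})`. -/
noncomputable def Pmat (N : ℕ) : Matrix (Fin (N+1)) (Fin (N+1)) ℂ :=
  Matrix.of fun j k =>
    (Complex.I / (Real.sqrt 2 : ℂ)) *
      ((Real.sqrt ((k : ℕ) + 1) : ℂ) * (if (j : ℕ) = (k : ℕ) + 1 then 1 else 0) -
       (Real.sqrt (k : ℕ) : ℂ) * (if (j : ℕ) + 1 = (k : ℕ) then 1 else 0))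

/-- The action difference `D_N = (Q_N P_N − P_N Q_N)/i`. -/
noncomputable def Dmat (N : ℕ) : Matrix (Fin (N+1)) (Fin (N+1)) ℂ :=
  Complex.I⁻¹ • (Qmat N * Pmat N - Pmat N * Qmat N)

/-!
With the lowering matrix `A` (`A_{k+1,k} = √(k+1)`) one has `Q = (A + Aᵀ)/√2` and
`P = i(A − Aᵀ)/√2`, hence `D = AᵀA − AAᵀ = 1 − (N+1) E`, where `E` is the matrix unit at
`(N, N)`. If `U` is unitary and `U†QU` is diagonal, then `U†DU = [U†QU, U†PU]/i` is a commutator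
with a diagonal matrix, so its diagonal vanishes; comparing with `U†DU = 1 − (N+1) u u†`, where
`u` is the conjugate of the last row of `U`, gives `|U_{N,i}|² = 1/(N+1)` for every `i`.
Multiplying the columns of `U` by phases makes that row constantly `1/√(N+1)`, and then
`U†DU = 1 − J`.
-/

theorem ofReal_sqrt_mul_ofReal_sqrt {x : ℝ} (hx : 0 ≤ x) : (Real.sqrt x : ℂ) * Real.sqrt x = x := by
  rw [← Complex.ofReal_mul, Real.mul_self_sqrt hx]

section UnitaryConjugation

variable {n : Type*} [Fintype n] [DecidableEq n]

theorem conjTranspose_mul_commutator_mul {R : Type*} [Ring R] [StarRing R] {U : Matrix n n R}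
    (hU : U * Uᴴ = 1) (X Y : Matrix n n R) :
    Uᴴ * (X * Y - Y * X) * U = Uᴴ * X * U * (Uᴴ * Y * U) - Uᴴ * Y * U * (Uᴴ * X * U) := by
  have hconj : ∀ A B : Matrix n n R, Uᴴ * A * U * (Uᴴ * B * U) = Uᴴ * (A * B) * U := by
    intro A B
    simp only [← Matrix.mul_assoc]
    rw [Matrix.mul_assoc (Uᴴ * A) U, hU, Matrix.mul_one]
  rw [hconj, hconj, Matrix.mul_sub, Matrix.sub_mul]

theorem diagonal_commutator_apply_self {R : Type*} [CommRing R] (d : n → R)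
    (M : Matrix n n R) (i : n) : (diagonal d * M - M * diagonal d) i i = 0 := by
  simp [mul_comm]

theorem conjTranspose_mul_single_mul {R : Type*} [Semiring R] [StarRing R] (U : Matrix n n R)
    (l : n) : Uᴴ * single l l 1 * U = vecMulVec (star (U l)) (U l) := by
  ext a b
  simp [mul_apply, single_apply, vecMulVec_apply, ite_and, ite_mul]

theorem conjTranspose_mul_diagonal_conj {R : Type*} [CommRing R] [StarRing R]
    {U A : Matrix n n R} {d : n → R} (h : Uᴴ * A * U = diagonal d) (c : n → R) :
    (U * diagonal c)ᴴ * A * (U * diagonal c) = diagonal (star c * d * c) := by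
  calc (U * diagonal c)ᴴ * A * (U * diagonal c)
      = diagonal (star c) * (Uᴴ * A * U) * diagonal c := by
        simp only [conjTranspose_mul, diagonal_conjTranspose, Matrix.mul_assoc]
    _ = diagonal (star c * d * c) := by
        rw [h, diagonal_mul_diagonal, diagonal_mul_diagonal]; rfl

theorem diagonal_mem_unitaryGroup {c : n → ℂ} (hc : ∀ i, ‖c i‖ = 1) :
    diagonal c ∈ unitaryGroup n ℂ := by
  rw [mem_unitaryGroup_iff, star_eq_conjTranspose, diagonal_conjTranspose, diagonal_mul_diagonal,
    ← diagonal_one]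
  congr 1
  funext i
  simp [Complex.mul_conj', hc]

theorem exists_diagonal_mem_unitaryGroup_row_eq_norm (U : Matrix n n ℂ) (l : n) :
    ∃ c : n → ℂ, diagonal c ∈ unitaryGroup n ℂ ∧ ∀ i, (U * diagonal c) l i = ‖U l i‖ := by
  refine ⟨fun i => (Complex.exp (Complex.arg (U l i) * Complex.I))⁻¹,
    diagonal_mem_unitaryGroup fun i => by simp [Complex.norm_exp_ofReal_mul_I], fun i => ?_⟩
  rw [mul_diagonal]
  nth_rw 1 [← Complex.norm_mul_exp_arg_mul_I (U l i)]
  rw [mul_assoc, mul_inv_cancel₀ (Complex.exp_ne_zero _), mul_one]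

theorem Matrix.IsHermitian.exists_mem_unitaryGroup_conj_eq_diagonal {𝕜 : Type*} [RCLike 𝕜]
    {A : Matrix n n 𝕜} (hA : A.IsHermitian) :
    ∃ U ∈ unitaryGroup n 𝕜, ∃ d : n → 𝕜, Uᴴ * A * U = diagonal d := by
  refine ⟨hA.eigenvectorUnitary, hA.eigenvectorUnitary.2, RCLike.ofReal ∘ hA.eigenvalues, ?_⟩
  simpa [Unitary.conjStarAlgAut_star_apply, star_eq_conjTranspose] using
    hA.conjStarAlgAut_star_eigenvectorUnitary

end UnitaryConjugation

noncomputable def lowering (N : ℕ) : Matrix (Fin (N+1)) (Fin (N+1)) ℂ :=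
  Matrix.of fun j k => if (j : ℕ) = k + 1 then (Real.sqrt ((k : ℕ) + 1) : ℂ) else 0

theorem Qmat_eq_lowering (N : ℕ) :
    Qmat N = ((Real.sqrt 2 : ℝ) : ℂ)⁻¹ • (lowering N + (lowering N)ᵀ) := by
  ext ⟨j, hj⟩ ⟨k, hk⟩
  simp only [Qmat, lowering, of_apply, Matrix.smul_apply, Matrix.add_apply, transpose_apply,
    smul_eq_mul]
  split_ifs <;> first | omega | (subst_vars; push_cast; ring_nf)

theorem Pmat_eq_lowering (N : ℕ) :
    Pmat N = (Complex.I / ((Real.sqrt 2 : ℝ) : ℂ)) • (lowering N - (lowering N)ᵀ) := by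
  ext ⟨j, hj⟩ ⟨k, hk⟩
  simp only [Pmat, lowering, of_apply, Matrix.smul_apply, Matrix.sub_apply, transpose_apply,
    smul_eq_mul]
  split_ifs <;> first | omega | (subst_vars; push_cast; ring_nf)

theorem lowering_conjTranspose (N : ℕ) : (lowering N)ᴴ = (lowering N)ᵀ := by
  ext j k
  simp only [conjTranspose_apply, transpose_apply, lowering, of_apply]
  split_ifs <;> simp

theorem lowering_transpose_mul_lowering (N : ℕ) :
    (lowering N)ᵀ * lowering N =
      diagonal fun k : Fin (N+1) => if (k : ℕ) < N then (k : ℂ) + 1 else 0 := by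
  ext ⟨j, hj⟩ ⟨k, hk⟩
  simp only [mul_apply, transpose_apply, lowering, of_apply]
  rw [Fin.sum_univ_eq_sum_range fun b => (if b = j + 1 then (Real.sqrt (j + 1) : ℂ) else 0) *
    (if b = k + 1 then (Real.sqrt (k + 1) : ℂ) else 0)]
  simp only [ite_mul, zero_mul, mul_ite, mul_zero, Finset.sum_ite_eq', Finset.mem_range,
    diagonal_apply, Fin.ext_iff]
  split_ifs <;> first | omega | rfl |
    (obtain rfl : j = k := by omega
     rw [ofReal_sqrt_mul_ofReal_sqrt (by positivity)]; push_cast; ring)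

theorem lowering_mul_lowering_transpose (N : ℕ) :
    lowering N * (lowering N)ᵀ = diagonal fun k : Fin (N+1) => (k : ℂ) := by
  ext ⟨j, hj⟩ ⟨k, hk⟩
  simp only [mul_apply, transpose_apply, lowering, of_apply]
  rw [Fin.sum_univ_eq_sum_range fun b => (if j = b + 1 then (Real.sqrt (b + 1) : ℂ) else 0) *
    (if k = b + 1 then (Real.sqrt (b + 1) : ℂ) else 0)]
  rcases k with _ | k
  · simp +contextual [diagonal_apply]
  · simp only [Nat.add_right_cancel_iff, mul_ite, ite_mul, zero_mul, mul_zero, Finset.sum_ite_eq,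
      Finset.mem_range, Order.lt_add_one_iff, diagonal_apply, Fin.ext_iff]
    split_ifs <;> first | omega | rfl |
      (subst_vars; rw [ofReal_sqrt_mul_ofReal_sqrt (by positivity)]; push_cast; ring)

theorem Dmat_eq_lowering (N : ℕ) :
    Dmat N = (lowering N)ᵀ * lowering N - lowering N * (lowering N)ᵀ := by
  have hscalar : Complex.I⁻¹ * (((Real.sqrt 2 : ℝ) : ℂ)⁻¹ * (Complex.I / (Real.sqrt 2 : ℝ))) * 2
      = 1 := by
    have := ofReal_sqrt_mul_ofReal_sqrt zero_le_two
    field_simp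
    push_cast at this ⊢
    rw [sq, this]
  have hcomm : ∀ X Y : Matrix (Fin (N+1)) (Fin (N+1)) ℂ,
      (X + Y) * (X - Y) - (X - Y) * (X + Y) = (2 : ℂ) • (Y * X - X * Y) := by
    intro X Y; rw [two_smul]; noncomm_ring
  rw [Dmat, Qmat_eq_lowering, Pmat_eq_lowering, Matrix.smul_mul, Matrix.mul_smul, Matrix.smul_mul,
    Matrix.mul_smul, smul_smul, smul_smul, mul_comm (Complex.I / _), ← smul_sub, hcomm]
  match_scalars
  · linear_combination hscalar
  · linear_combination -hscalar

theorem Dmat_eq (N : ℕ) :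
    Dmat N = 1 - ((N : ℂ) + 1) • single (Fin.last N) (Fin.last N) 1 := by
  rw [Dmat_eq_lowering, lowering_transpose_mul_lowering, lowering_mul_lowering_transpose]
  ext ⟨j, hj⟩ ⟨k, hk⟩
  by_cases hjk : j = k
  · subst hjk
    by_cases hjN : j = N
    · subst hjN; simp [single_apply, Fin.ext_iff]
    · have : j < N := by omega
      simp [Fin.ext_iff, Ne.symm hjN, this]
  · simp [single_apply, Fin.ext_iff, hjk]
    omega

theorem Qmat_isHermitian (N : ℕ) : (Qmat N).IsHermitian := by
  rw [IsHermitian, Qmat_eq_lowering, conjTranspose_smul, conjTranspose_add,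
    conjTranspose_transpose_eq_transpose_conjTranspose, lowering_conjTranspose, transpose_transpose,
    add_comm (lowering N)ᵀ, star_inv₀, Complex.star_def, Complex.conj_ofReal]

theorem conjTranspose_mul_Dmat_mul {N : ℕ} {U : Matrix (Fin (N+1)) (Fin (N+1)) ℂ}
    (hU : Uᴴ * U = 1) :
    Uᴴ * Dmat N * U = 1 - ((N : ℂ) + 1) • vecMulVec (star (U (Fin.last N))) (U (Fin.last N)) := by
  rw [Dmat_eq, Matrix.mul_sub, Matrix.sub_mul, Matrix.mul_one, hU, Matrix.mul_smul,
    Matrix.smul_mul, conjTranspose_mul_single_mul]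

theorem norm_last_row {N : ℕ} {U : Matrix (Fin (N+1)) (Fin (N+1)) ℂ}
    (hU : U ∈ unitaryGroup (Fin (N+1)) ℂ) {d : Fin (N+1) → ℂ}
    (hUQ : Uᴴ * Qmat N * U = diagonal d) (i : Fin (N+1)) :
    ‖U (Fin.last N) i‖ = (Real.sqrt (N + 1))⁻¹ := by
  have hzero : (Uᴴ * Dmat N * U) i i = 0 := by
    rw [Dmat, Matrix.mul_smul, Matrix.smul_mul, Matrix.smul_apply,
      conjTranspose_mul_commutator_mul (mem_unitaryGroup_iff.1 hU), hUQ,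
      diagonal_commutator_apply_self, smul_zero]
  rw [conjTranspose_mul_Dmat_mul (mem_unitaryGroup_iff'.1 hU)] at hzero
  simp only [Matrix.sub_apply, one_apply_eq, Matrix.smul_apply, vecMulVec_apply, Pi.star_apply,
    RCLike.star_def, Complex.conj_mul', smul_eq_mul] at hzero
  have hsq : ((N : ℝ) + 1) * ‖U (Fin.last N) i‖ ^ 2 = 1 := by
    exact_mod_cast (by linear_combination -hzero : ((N : ℂ) + 1) * ‖U (Fin.last N) i‖ ^ 2 = 1)
  rw [← Real.sqrt_inv, inv_eq_of_mul_eq_one_right hsq, Real.sqrt_sq (norm_nonneg _)]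

/-- there is a unitary `U` diagonalizing `Q_N` such that the action
difference in the position basis is `U† D_N U = I − J` (zero diagonal, `−1` off-diagonal). -/
theorem action_difference_position_basis (N : ℕ) :
    ∃ U : Matrix (Fin (N+1)) (Fin (N+1)) ℂ,
      Uᴴ * U = 1 ∧ U * Uᴴ = 1 ∧
      (∃ d : Fin (N+1) → ℂ, Uᴴ * Qmat N * U = Matrix.diagonal d) ∧
      Uᴴ * Dmat N * U =
        (1 : Matrix (Fin (N+1)) (Fin (N+1)) ℂ) - Matrix.of (fun _ _ => (1 : ℂ)) := by
  obtain ⟨V, hV, d, hVQ⟩ := (Qmat_isHermitian N).exists_mem_unitaryGroup_conj_eq_diagonal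
  obtain ⟨c, hc, hrow⟩ := exists_diagonal_mem_unitaryGroup_row_eq_norm V (Fin.last N)
  have hU : V * diagonal c ∈ unitaryGroup (Fin (N+1)) ℂ := Submonoid.mul_mem _ hV hc
  refine ⟨V * diagonal c, mem_unitaryGroup_iff'.1 hU, mem_unitaryGroup_iff.1 hU,
    ⟨_, conjTranspose_mul_diagonal_conj hVQ c⟩, ?_⟩
  rw [conjTranspose_mul_Dmat_mul (mem_unitaryGroup_iff'.1 hU)]
  congr 1
  ext i j
  simp only [Matrix.smul_apply, vecMulVec_apply, Pi.star_apply, hrow, norm_last_row hV hVQ,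
    RCLike.star_def, Complex.conj_ofReal, smul_eq_mul, of_apply]
  push_cast
  rw [← mul_inv, ofReal_sqrt_mul_ofReal_sqrt (by positivity)]
  push_cast
  field_simp
end
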